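/- The system 2(x₂ − x₁) + sin(2x₂) − sin(2x₁) − 1.2 = 0 and cos(2x₁) − cos(2x₂) − 0.4 = 0 has at least one solution with (x₁, x₂) ∈ [0, 1] × [0, 1]. -/

import Mathlib

/-!
In the coordinates `u = x₂ - x₁`, `v = x₁ + x₂` the sum-to-product formulas turn the system into
`sin u * cos v = 3/5 - u`, `sin u * sin v = 1/5`. So `(3/5 - u, 1/5)` must be the point of polar
radius `sin u` and angle `v`: the intermediate value theorem gives `u ∈ [1/3, 7/20]` with
`sin u ^ 2 = (3/5 - u) ^ 2 + (1/5) ^ 2`, and `v` is then the first-quadrant polar angle of that point.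
-/

open Real Set

lemma sin_two_mul_sub_sin_two_mul (x₁ x₂ : ℝ) :
    sin (2 * x₂) - sin (2 * x₁) = 2 * sin (x₂ - x₁) * cos (x₁ + x₂) := by
  rw [sin_sub_sin]
  ring_nf

lemma cos_two_mul_sub_cos_two_mul (x₁ x₂ : ℝ) :
    cos (2 * x₁) - cos (2 * x₂) = 2 * sin (x₂ - x₁) * sin (x₁ + x₂) := by
  rw [cos_sub_cos, ← neg_sub (2 * x₂), neg_div, sin_neg]
  ring_nf

lemma exists_polar_angle_mem_Icc_zero_pi_div_two {r a b : ℝ} (hr : 0 < r) (ha : 0 ≤ a)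
    (hb : 0 ≤ b) (h : a ^ 2 + b ^ 2 = r ^ 2) :
    ∃ v ∈ Icc 0 (π / 2), r * cos v = a ∧ r * sin v = b := by
  have hbr : b / r ≤ 1 := by
    rw [div_le_one hr]
    nlinarith
  refine ⟨arcsin (b / r), ⟨arcsin_nonneg.2 (by positivity), arcsin_le_pi_div_two _⟩, ?_, ?_⟩
  · have h1 : 1 - (b / r) ^ 2 = (a / r) ^ 2 := by
      field_simp
      linarith
    rw [cos_arcsin, h1, sqrt_sq (by positivity)]
    field_simp
  · rw [sin_arcsin (by linarith [div_nonneg hb hr.le]) hbr]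
    field_simp

lemma exists_sin_sq_eq_mem_Icc :
    ∃ u ∈ Icc (1 / 3 : ℝ) (7 / 20), sin u ^ 2 = (3 / 5 - u) ^ 2 + (1 / 5) ^ 2 := by
  let f : ℝ → ℝ := fun u ↦ sin u ^ 2 - (3 / 5 - u) ^ 2 - (1 / 5) ^ 2
  have hf : ContinuousOn f (Icc (1 / 3) (7 / 20)) := by fun_prop
  have hleft : f (1 / 3) ≤ 0 := by
    have hsin_le : sin (1 / 3) ≤ 1 / 3 := sin_le (by norm_num)
    have hsin_nonneg : 0 ≤ sin (1 / 3) :=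
      sin_nonneg_of_nonneg_of_le_pi (by norm_num) (by linarith [pi_gt_three])
    simp only [f]
    nlinarith
  have hright : 0 ≤ f (7 / 20) := by
    have hsin_gt : 7 / 20 - (7 / 20) ^ 3 / 6 < sin (7 / 20) := sin_gt_sub_cube (by norm_num)
    simp only [f]
    nlinarith
  obtain ⟨u, hu, hfu⟩ := intermediate_value_Icc (by norm_num) hf ⟨hleft, hright⟩
  exact ⟨u, hu, by simp only [f] at hfu; linarith⟩

theorem trig_system_exists_solution :
    ∃ x₁ x₂ : ℝ, x₁ ∈ Set.Icc (0 : ℝ) 1 ∧ x₂ ∈ Set.Icc (0 : ℝ) 1 ∧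
      2 * (x₂ - x₁) + Real.sin (2 * x₂) - Real.sin (2 * x₁) - 6 / 5 = 0 ∧
      Real.cos (2 * x₁) - Real.cos (2 * x₂) - 2 / 5 = 0 := by
  obtain ⟨u, ⟨hu₁, hu₂⟩, hsq⟩ := exists_sin_sq_eq_mem_Icc
  have hsin_pos : 0 < sin u := sin_pos_of_pos_of_lt_pi (by linarith) (by linarith [pi_gt_three])
  obtain ⟨v, ⟨hv₀, hv₁⟩, hcos, hsin⟩ :=
    exists_polar_angle_mem_Icc_zero_pi_div_two hsin_pos (by linarith) (by norm_num) hsq.symm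
  -- `1/5 = sin u * sin v ≤ u * v ≤ 7/20 * v` forces `v ≥ 4/7 > u`.
  have huv : u ≤ v := by
    nlinarith [sin_le (by linarith : 0 ≤ u), sin_le hv₀,
      sin_nonneg_of_nonneg_of_le_pi hv₀ (by linarith [pi_gt_three])]
  have hvu : v + u ≤ 2 := by linarith [pi_lt_d2]
  have hdiff : (v + u) / 2 - (v - u) / 2 = u := by ring
  have hsum : (v - u) / 2 + (v + u) / 2 = v := by ring
  refine ⟨(v - u) / 2, (v + u) / 2, ⟨by linarith, by linarith⟩, ⟨by linarith, by linarith⟩, ?_, ?_⟩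
  · rw [add_sub_assoc, sin_two_mul_sub_sin_two_mul, hdiff, hsum]
    linarith
  · rw [cos_two_mul_sub_cos_two_mul, hdiff, hsum]
    linarith
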